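/- arXiv:1409.6510 — 8 statements merged into one kernel-verified Lean document; each statement's English description precedes it below -/
import Mathlib

section
/- An n×n real matrix A is a balanced 3-cycle matrix if and only if A can be written as the sum of a symmetric matrix and a (finite) linear combination of directed cut matrices. -/
open Finset

def QAP {n : ℕ} (A B : Matrix (Fin n) (Fin n) ℝ) (π : Equiv.Perm (Fin n)) : ℝ :=
  ∑ i, ∑ j, A (π i) (π j) * B i j

def LAP {n : ℕ} (C : Matrix (Fin n) (Fin n) ℝ) (π : Equiv.Perm (Fin n)) : ℝ :=
  ∑ i, C i (π i)

def Fmat (n : ℕ) : Matrix (Fin n) (Fin n) ℝ := fun i j => if j < i then 1 else 0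

def Hmat (n : ℕ) : Matrix (Fin n) (Fin n) ℝ :=
  fun i j => if (j : ℕ) = ((i : ℕ) + 1) % n then 1 else 0

def DirCut {n : ℕ} (I : Finset (Fin n)) : Matrix (Fin n) (Fin n) ℝ :=
  fun i j => if i ∈ I ∧ j ∉ I then 1 else 0

def Balanced3Cycle {n : ℕ} (A : Matrix (Fin n) (Fin n) ℝ) : Prop :=
  ∀ i j k, A i j + A j k + A k i = A j i + A k j + A i k

def Linearizable {n : ℕ} (A B : Matrix (Fin n) (Fin n) ℝ) : Prop :=
  ∃ C : Matrix (Fin n) (Fin n) ℝ, ∀ π : Equiv.Perm (Fin n), QAP A B π = LAP C π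

/-
A matrix is balanced exactly when its antisymmetric part is a gradient, `A i j - A j i = f i - f j`
for a potential `f` (fix a base point `k` and take `f i = A i k - A k i`). Potentials are additive,
symmetric matrices have potential `0`, and `DirCut I` has the indicator of `I` as potential. So a
matrix with potential `f` differs from `∑ s, f s • DirCut {s}` by a matrix of potential `0`, i.e. a
symmetric one.
-/

def HasPotential {ι α : Type*} [AddCommGroup α] (A : Matrix ι ι α) (f : ι → α) : Prop :=
  ∀ i j, A i j - A j i = f i - f j

namespace HasPotential

variable {ι α : Type*} [AddCommGroup α] {A B : Matrix ι ι α} {f g : ι → α}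

theorem add (hA : HasPotential A f) (hB : HasPotential B g) : HasPotential (A + B) (f + g) :=
  fun i j => by simp only [Matrix.add_apply, Pi.add_apply]; rw [← sub_add_sub_comm, hA, hB]; abel

theorem smul {R : Type*} [Monoid R] [DistribMulAction R α] (c : R) (hA : HasPotential A f) :
    HasPotential (c • A) (c • f) :=
  fun i j => by simp only [Matrix.smul_apply, Pi.smul_apply, ← smul_sub, hA i j]

theorem sum {κ : Type*} (s : Finset κ) {A : κ → Matrix ι ι α} {f : κ → ι → α}
    (h : ∀ t ∈ s, HasPotential (A t) (f t)) : HasPotential (∑ t ∈ s, A t) (∑ t ∈ s, f t) := by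
  classical
  induction s using Finset.induction_on with
  | empty => intro i j; simp
  | insert a s ha ih =>
    rw [sum_insert ha, sum_insert ha]
    exact (h a (mem_insert_self a s)).add (ih fun t ht => h t (mem_insert_of_mem ht))

theorem isSymm_sub (hA : HasPotential A f) (hB : HasPotential B f) : (A - B).IsSymm :=
  Matrix.IsSymm.ext fun i j => by
    simp only [Matrix.sub_apply]
    rw [← sub_eq_zero, sub_sub_sub_comm, hA, hB, sub_self]

end HasPotential

theorem Matrix.IsSymm.hasPotential_zero {ι α : Type*} [AddCommGroup α] {S : Matrix ι ι α}
    (hS : S.IsSymm) : HasPotential S 0 :=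
  fun i j => by simp [hS.apply i j]

theorem hasPotential_dirCut {n : ℕ} (I : Finset (Fin n)) :
    HasPotential (DirCut I) fun i => if i ∈ I then 1 else 0 := by
  intro i j
  unfold DirCut
  by_cases hi : i ∈ I <;> by_cases hj : j ∈ I <;> simp [hi, hj]

theorem hasPotential_sum_smul_dirCut_singleton {n : ℕ} (f : Fin n → ℝ) :
    HasPotential (∑ s, f s • DirCut {s}) f := by
  have h := HasPotential.sum univ fun s _ => (hasPotential_dirCut {s}).smul (f s)
  convert h using 1
  ext i
  simp

theorem balanced3Cycle_iff_exists_hasPotential {n : ℕ} (A : Matrix (Fin n) (Fin n) ℝ) :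
    Balanced3Cycle A ↔ ∃ f, HasPotential A f := by
  constructor
  · intro hA
    rcases isEmpty_or_nonempty (Fin n) with _ | ⟨⟨k⟩⟩
    · exact ⟨0, fun i => isEmptyElim i⟩
    · exact ⟨fun i => A i k - A k i, fun i j => by linarith [hA i j k]⟩
  · rintro ⟨f, hf⟩ i j k
    linarith [hf i j, hf j k, hf k i]

theorem stmt4 {n : ℕ} (A : Matrix (Fin n) (Fin n) ℝ) :
    Balanced3Cycle A ↔
    ∃ (S : Matrix (Fin n) (Fin n) ℝ) (_ : S.IsSymm) (m : ℕ)
      (I : Fin m → Finset (Fin n)) (lam : Fin m → ℝ),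
      A = S + ∑ t, lam t • DirCut (I t) := by
  rw [balanced3Cycle_iff_exists_hasPotential]
  constructor
  · rintro ⟨f, hf⟩
    exact ⟨A - ∑ s, f s • DirCut {s}, hf.isSymm_sub (hasPotential_sum_smul_dirCut_singleton f),
      n, fun s => {s}, f, (sub_add_cancel _ _).symm⟩
  · rintro ⟨S, hS, m, I, lam, rfl⟩
    exact ⟨_, hS.hasPotential_zero.add
      (HasPotential.sum univ fun t _ => (hasPotential_dirCut (I t)).smul (lam t))⟩
end

section
/- If A is a weak sum matrix, i.e., there exist reals α_1,...,α_n and β_1,...,β_n with a_{ij} = α_i + β_j for all i ≠ j, then the QAP with matrices A and B is linearizable for every n×n matrix B. -/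
open Finset

theorem stmt5 {n : ℕ} (A : Matrix (Fin n) (Fin n) ℝ)
    (hA : ∃ α β : Fin n → ℝ, ∀ i j, i ≠ j → A i j = α i + β j)
    (B : Matrix (Fin n) (Fin n) ℝ) : Linearizable A B := by
  obtain ⟨α, β, h⟩ := hA
  refine ⟨fun i k => α k * ∑ j, B i j + β k * ∑ j, B j i
      + (A k k - α k - β k) * B i i, fun π => ?_⟩
  unfold QAP LAP
  have key : ∀ i : Fin n, ∑ j, A (π i) (π j) * B i j
      = α (π i) * ∑ j, B i j + ∑ j, β (π j) * B i j
        + (A (π i) (π i) - α (π i) - β (π i)) * B i i := by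
    intro i
    have step : ∀ j : Fin n, A (π i) (π j) * B i j
        = (α (π i) * B i j + β (π j) * B i j)
          + (if j = i then (A (π i) (π i) - α (π i) - β (π i)) * B i i else 0) := by
      intro j
      by_cases hj : j = i
      · subst hj; simp; ring
      · have hne : π i ≠ π j := fun e => hj (π.injective e.symm)
        rw [h (π i) (π j) hne]
        simp [hj]; ring
    rw [Finset.sum_congr rfl fun j _ => step j, Finset.sum_add_distrib,
      Finset.sum_add_distrib, Finset.sum_ite_eq' _ i]
    simp [Finset.mul_sum]
  rw [Finset.sum_congr rfl fun i _ => key i, Finset.sum_add_distrib,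
    Finset.sum_add_distrib]
  have swap : ∑ i, ∑ j, β (π j) * B i j = ∑ i : Fin n, β (π i) * ∑ j, B j i := by
    rw [Finset.sum_comm]
    simp [Finset.mul_sum]
  rw [swap]
  simp [Finset.sum_add_distrib]
end

section
/- For any directed cut matrix A, the FAS-QAP for A is linearizable: there exists a matrix C with QAP(A, F_n, π) = LAP(C, π) for all permutations π. -/
open Finset

/-!
Relabelling by `π` turns the cut of `I` into the cut of `J = π⁻¹(I)`, and `QAP` counts the pairs
`j < i` with `i ∈ J`, `j ∉ J`. For `i ∈ J` there are `i - #{j ∈ J | j < i}` of them, and the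
subtracted ranks add up to `(#J).choose 2 = (#I).choose 2`, independently of `π`. So the objective is
`∑ i ∈ J, i - (#I).choose 2`, which is the `LAP` objective of `c i j = [j ∈ I] * i - (#I).choose 2 / n`.
-/

theorem Finset.sum_card_filter_lt_eq_choose_two {α : Type*} [LinearOrder α] (s : Finset α) :
    ∑ i ∈ s, #(s.filter (· < i)) = (#s).choose 2 := by
  induction s using Finset.induction_on_max with
  | empty => simp
  | insert a s hlt ih =>
    have ha : a ∉ s := fun h => lt_irrefl a (hlt a h)
    have below_a : (insert a s).filter (· < a) = s := by
      ext x
      simp only [mem_filter, mem_insert]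
      exact ⟨fun ⟨h, hx⟩ => h.resolve_left hx.ne, fun hx => ⟨Or.inr hx, hlt x hx⟩⟩
    have below_i : ∀ i ∈ s, (insert a s).filter (· < i) = s.filter (· < i) := fun i hi => by
      rw [filter_insert, if_neg (hlt i hi).not_gt]
    rw [Finset.sum_insert ha, card_insert_of_notMem ha, Nat.choose_succ_succ', Nat.choose_one_right,
      below_a, sum_congr rfl fun i hi => by rw [below_i i hi], ih]

lemma card_Iio_sdiff_add_card_filter_lt {n : ℕ} (J : Finset (Fin n)) (i : Fin n) :
    #(Iio i \ J) + #(J.filter (· < i)) = i := by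
  have : J.filter (· < i) = Iio i ∩ J := by ext; simp [and_comm]
  rw [this, card_sdiff_add_card_inter, Fin.card_Iio]

lemma sum_dirCut_mul_fmat_eq_sum_card_sdiff {n : ℕ} (J : Finset (Fin n)) :
    ∑ i, ∑ j, DirCut J i j * Fmat n i j = ∑ i ∈ J, (#(Iio i \ J) : ℝ) := by
  have row (i : Fin n) :
      ∑ j, DirCut J i j * Fmat n i j = if i ∈ J then (#(Iio i \ J) : ℝ) else 0 := by
    split_ifs with hi
    · simp only [DirCut, Fmat, hi, true_and, ite_mul, one_mul, zero_mul, ← ite_and, sum_boole]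
      congr 2
      ext j
      simp [and_comm]
    · simp [DirCut, hi]
  simp_rw [row, sum_ite_mem, univ_inter]

lemma dirCut_apply_perm {n : ℕ} (I : Finset (Fin n)) (π : Equiv.Perm (Fin n)) (i j : Fin n) :
    DirCut I (π i) (π j) = DirCut (I.map π.symm.toEmbedding) i j := by
  simp [DirCut]

lemma sum_dirCut_mul_fmat {n : ℕ} (J : Finset (Fin n)) :
    ∑ i, ∑ j, DirCut J i j * Fmat n i j = ∑ i ∈ J, (i : ℝ) - ((#J).choose 2 : ℝ) := by
  have count (i : Fin n) : (#(Iio i \ J) : ℝ) = i - #(J.filter (· < i)) := by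
    rw [eq_sub_iff_add_eq, ← Nat.cast_add, card_Iio_sdiff_add_card_filter_lt]
  rw [sum_dirCut_mul_fmat_eq_sum_card_sdiff, sum_congr rfl fun i _ => count i, sum_sub_distrib,
    ← Finset.sum_card_filter_lt_eq_choose_two, Nat.cast_sum]

lemma qap_dirCut_fmat {n : ℕ} (I : Finset (Fin n)) (π : Equiv.Perm (Fin n)) :
    QAP (DirCut I) (Fmat n) π = ∑ i ∈ I.map π.symm.toEmbedding, (i : ℝ) - ((#I).choose 2 : ℝ) := by
  simp only [QAP, dirCut_apply_perm, sum_dirCut_mul_fmat, card_map]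

lemma lap_sub_const_div {n : ℕ} (hn : n ≠ 0) (C : Matrix (Fin n) (Fin n) ℝ) (c : ℝ)
    (π : Equiv.Perm (Fin n)) : LAP (C - Matrix.of fun _ _ => c / n) π = LAP C π - c := by
  simp only [LAP, Matrix.sub_apply, Matrix.of_apply]
  rw [sum_sub_distrib, sum_const, card_univ, Fintype.card_fin, nsmul_eq_mul,
    mul_div_cancel₀ _ (Nat.cast_ne_zero.mpr hn)]

theorem stmt10 {n : ℕ} (I : Finset (Fin n)) :
    Linearizable (DirCut I) (Fmat n) := by
  rcases eq_or_ne n 0 with rfl | hn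
  · exact ⟨0, fun π => by simp [QAP, LAP]⟩
  refine ⟨(Matrix.of fun i j : Fin n => if j ∈ I then (i : ℝ) else 0) -
    Matrix.of fun _ _ : Fin n => ((#I).choose 2 : ℝ) / n, fun π => ?_⟩
  have lap_weights : LAP (Matrix.of fun i j => if j ∈ I then (i : ℝ) else 0) π
      = ∑ i ∈ I.map π.symm.toEmbedding, (i : ℝ) := by
    have mem_iff (i : Fin n) : π i ∈ I ↔ i ∈ I.map π.symm.toEmbedding := by simp
    simp only [LAP, Matrix.of_apply, mem_iff, sum_ite_mem, univ_inter]
  rw [lap_sub_const_div hn, lap_weights, qap_dirCut_fmat]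
end

section
/- If the FAS-QAP for an n×n matrix A is linearizable, then for any subset J ⊆ {1,...,n} the FAS-QAP for the principal submatrix A[J] is also linearizable. -/
open Finset

section AuxStmt11

variable {n : ℕ}

lemma aux_card_le (J : Finset (Fin n)) : J.card ≤ n := by
  simpa using Finset.card_le_univ J

lemma aux_card_compl (J : Finset (Fin n)) : Jᶜ.card = n - J.card := by
  simp [Finset.card_compl]

noncomputable def auxCemb (J : Finset (Fin n)) : Fin (n - J.card) ↪o Fin n :=
  Jᶜ.orderEmbOfFin (aux_card_compl J)

def auxPos (J : Finset (Fin n)) : Fin n ≃ (Fin J.card ⊕ Fin (n - J.card)) :=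
  (finCongr (Nat.add_sub_cancel' (aux_card_le J)).symm).trans finSumFinEquiv.symm

lemma auxPos_symm_inl (J : Finset (Fin n)) (a : Fin J.card) :
    (((auxPos J).symm (Sum.inl a)) : ℕ) = a := by
  simp [auxPos]

lemma auxPos_symm_inr (J : Finset (Fin n)) (b : Fin (n - J.card)) :
    (((auxPos J).symm (Sum.inr b)) : ℕ) = J.card + b := by
  simp [auxPos]

noncomputable def auxSumEquiv (J : Finset (Fin n)) :
    (Fin J.card ⊕ Fin (n - J.card)) ≃ Fin n :=
  Equiv.ofBijective (Sum.elim (J.orderEmbOfFin rfl) (auxCemb J)) <| by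
    rw [Fintype.bijective_iff_injective_and_card]
    constructor
    · rintro (a | b) (a' | b') hxy
      · simp only [Sum.elim_inl] at hxy
        exact congrArg Sum.inl ((J.orderEmbOfFin rfl).injective hxy)
      · exfalso
        have h1 : J.orderEmbOfFin rfl a ∈ J := J.orderEmbOfFin_mem rfl a
        have h2 : auxCemb J b' ∈ Jᶜ := Jᶜ.orderEmbOfFin_mem _ b'
        simp only [Sum.elim_inl, Sum.elim_inr] at hxy
        rw [hxy] at h1
        simp_all [Finset.mem_compl]
      · exfalso
        have h1 : J.orderEmbOfFin rfl a' ∈ J := J.orderEmbOfFin_mem rfl a'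
        have h2 : auxCemb J b ∈ Jᶜ := Jᶜ.orderEmbOfFin_mem _ b
        simp only [Sum.elim_inl, Sum.elim_inr] at hxy
        rw [← hxy] at h1
        simp_all [Finset.mem_compl]
      · simp only [Sum.elim_inr] at hxy
        exact congrArg Sum.inr ((auxCemb J).injective hxy)
    · have := aux_card_le J
      simp only [Fintype.card_sum, Fintype.card_fin]
      omega

noncomputable def auxPerm (J : Finset (Fin n)) (σ : Equiv.Perm (Fin J.card)) :
    Equiv.Perm (Fin n) :=
  (auxPos J).trans ((Equiv.sumCongr σ (Equiv.refl _)).trans (auxSumEquiv J))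

lemma auxPerm_inl (J : Finset (Fin n)) (σ : Equiv.Perm (Fin J.card)) (a : Fin J.card) :
    auxPerm J σ ((auxPos J).symm (Sum.inl a)) = J.orderEmbOfFin rfl (σ a) := by
  simp [auxPerm, auxSumEquiv]

lemma auxPerm_inr (J : Finset (Fin n)) (σ : Equiv.Perm (Fin J.card)) (b : Fin (n - J.card)) :
    auxPerm J σ ((auxPos J).symm (Sum.inr b)) = auxCemb J b := by
  simp [auxPerm, auxSumEquiv]

lemma auxF_ll (J : Finset (Fin n)) (a a' : Fin J.card) :
    Fmat n ((auxPos J).symm (Sum.inl a)) ((auxPos J).symm (Sum.inl a')) = Fmat J.card a a' := by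
  simp only [Fmat, Fin.lt_def, auxPos_symm_inl]

lemma auxF_lr (J : Finset (Fin n)) (a : Fin J.card) (b : Fin (n - J.card)) :
    Fmat n ((auxPos J).symm (Sum.inl a)) ((auxPos J).symm (Sum.inr b)) = 0 := by
  have ha : (a : ℕ) < J.card := a.isLt
  simp only [Fmat, Fin.lt_def, auxPos_symm_inl, auxPos_symm_inr]
  rw [if_neg]
  omega

lemma auxF_rl (J : Finset (Fin n)) (a : Fin J.card) (b : Fin (n - J.card)) :
    Fmat n ((auxPos J).symm (Sum.inr b)) ((auxPos J).symm (Sum.inl a)) = 1 := by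
  have ha : (a : ℕ) < J.card := a.isLt
  simp only [Fmat, Fin.lt_def, auxPos_symm_inl, auxPos_symm_inr]
  rw [if_pos]
  omega

lemma auxF_rr (J : Finset (Fin n)) (b b' : Fin (n - J.card)) :
    Fmat n ((auxPos J).symm (Sum.inr b)) ((auxPos J).symm (Sum.inr b')) =
      Fmat (n - J.card) b b' := by
  simp only [Fmat, Fin.lt_def, auxPos_symm_inr]
  congr 1
  simp only [eq_iff_iff]
  omega

end AuxStmt11

theorem stmt11 {n : ℕ} (A : Matrix (Fin n) (Fin n) ℝ)
    (h : Linearizable A (Fmat n)) (J : Finset (Fin n)) :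
    Linearizable (fun i j : Fin J.card => A (J.orderEmbOfFin rfl i) (J.orderEmbOfFin rfl j))
      (Fmat J.card) := by
  obtain ⟨C, hC⟩ := h
  rcases Nat.eq_zero_or_pos J.card with h0 | hpos
  · refine ⟨0, fun σ => ?_⟩
    have : IsEmpty (Fin J.card) := by rw [h0]; infer_instance
    simp [QAP, LAP]
  · set emb := J.orderEmbOfFin rfl with hemb
    set ce := auxCemb J with hce
    have reidx : ∀ (g : Fin n → ℝ),
        ∑ i, g i = (∑ a, g ((auxPos J).symm (Sum.inl a))) +
          ∑ b, g ((auxPos J).symm (Sum.inr b)) := by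
      intro g
      rw [← Equiv.sum_comp (auxPos J).symm g, Fintype.sum_sum_type]
    -- expansion of the QAP value of extended permutations
    have expandQ : ∀ σ : Equiv.Perm (Fin J.card),
        QAP A (Fmat n) (auxPerm J σ) =
          (∑ a, ∑ a', A (emb (σ a)) (emb (σ a')) * Fmat J.card a a')
          + ((∑ b, ∑ a, A (ce b) (emb a))
          + (∑ b, ∑ b', A (ce b) (ce b') * Fmat (n - J.card) b b')) := by
      intro σ
      unfold QAP
      rw [reidx]
      congr 1
      · refine Finset.sum_congr rfl fun a _ => ?_
        rw [reidx]
        simp only [auxPerm_inl, auxPerm_inr, auxF_ll, auxF_lr, mul_zero,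
          Finset.sum_const_zero, add_zero, hemb]
      · rw [Finset.sum_congr rfl fun b (_ : b ∈ Finset.univ) => reidx
          (fun j => A (auxPerm J σ ((auxPos J).symm (Sum.inr b))) (auxPerm J σ j) *
            Fmat n ((auxPos J).symm (Sum.inr b)) j)]
        rw [Finset.sum_add_distrib]
        congr 1
        · refine Finset.sum_congr rfl fun b _ => ?_
          simp only [auxPerm_inl, auxPerm_inr, auxF_rl, mul_one, hemb, hce]
          exact Equiv.sum_comp σ (fun a => A (ce b) (emb a))
        · refine Finset.sum_congr rfl fun b _ => ?_
          simp only [auxPerm_inr, auxF_rr, hce]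
    have expandL : ∀ σ : Equiv.Perm (Fin J.card),
        LAP C (auxPerm J σ) =
          (∑ a, C ((auxPos J).symm (Sum.inl a)) (emb (σ a)))
          + ∑ b, C ((auxPos J).symm (Sum.inr b)) (ce b) := by
      intro σ
      unfold LAP
      rw [reidx]
      simp only [auxPerm_inl, auxPerm_inr, hemb, hce]
    set K : ℝ := (∑ b, C ((auxPos J).symm (Sum.inr b)) (ce b))
        - ((∑ b, ∑ a, A (ce b) (emb a))
          + (∑ b, ∑ b', A (ce b) (ce b') * Fmat (n - J.card) b b')) with hK
    refine ⟨fun i j => C ((auxPos J).symm (Sum.inl i)) (emb j) + K / J.card, fun σ => ?_⟩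
    have hmain := hC (auxPerm J σ)
    rw [expandQ σ, expandL σ] at hmain
    have hQval : QAP (fun i j : Fin J.card => A (emb i) (emb j)) (Fmat J.card) σ =
        ∑ a, ∑ a', A (emb (σ a)) (emb (σ a')) * Fmat J.card a a' := rfl
    have hLval : LAP (fun i j => C ((auxPos J).symm (Sum.inl i)) (emb j) + K / J.card) σ =
        (∑ a, C ((auxPos J).symm (Sum.inl a)) (emb (σ a))) + K := by
      unfold LAP
      rw [Finset.sum_add_distrib, Finset.sum_const, Finset.card_univ, Fintype.card_fin,
        nsmul_eq_mul, mul_div_cancel₀]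
      exact_mod_cast hpos.ne'
    rw [hQval, hLval, hK]
    linarith
end

section
/- The FAS-QAP for an n×n matrix A is linearizable if and only if A is a balanced 3-cycle matrix. -/
open Finset

namespace Stmt12Aux

lemma rowsum {n : ℕ} (i : Fin n) : ∑ j, Fmat n i j = (i.val : ℝ) := by
  simp only [Fmat]
  rw [Finset.sum_boole]
  norm_cast
  rw [Finset.filter_gt_eq_Iio, Fin.card_Iio]

lemma trich {n : ℕ} (i j : Fin n) :
    Fmat n i j + Fmat n j i + (if i = j then (1:ℝ) else 0) = 1 := by
  simp only [Fmat, Fin.lt_def, Fin.ext_iff]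
  split_ifs <;> first | omega | norm_num

lemma qap_reindex {n : ℕ} (A : Matrix (Fin n) (Fin n) ℝ) (π : Equiv.Perm (Fin n)) :
    ∑ i, ∑ j, A (π i) (π j) = ∑ i, ∑ j, A i j := by
  rw [← Equiv.sum_comp π (fun i => ∑ j, A i j)]
  exact Finset.sum_congr rfl fun i _ => Equiv.sum_comp π (A (π i))

lemma diag_reindex {n : ℕ} (A : Matrix (Fin n) (Fin n) ℝ) (π : Equiv.Perm (Fin n)) :
    ∑ i, A (π i) (π i) = ∑ i, A i i := Equiv.sum_comp π (fun i => A i i)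

variable {m : ℕ}

lemma swap_val (x : Fin (m + 2)) :
    ((Equiv.swap (0 : Fin (m + 2)) 1) x).val =
      if x.val = 0 then 1 else if x.val = 1 then 0 else x.val := by
  rcases eq_or_ne x 0 with rfl | hxz
  · simp
  · rcases eq_or_ne x 1 with rfl | hxo
    · simp [Equiv.swap_apply_right]
    · rw [Equiv.swap_apply_of_ne_of_ne hxz hxo]
      have h0 : x.val ≠ 0 := fun h => hxz (Fin.ext h)
      have h1 : x.val ≠ 1 := fun h => hxo (Fin.ext h)
      simp [h0, h1]

lemma fmat_swap (i j : Fin (m + 2)) :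
    Fmat (m + 2) (Equiv.swap (0 : Fin (m + 2)) 1 i) (Equiv.swap (0 : Fin (m + 2)) 1 j) =
    Fmat (m + 2) i j + (if i = 0 then if j = 1 then 1 else 0 else 0)
      - (if i = 1 then if j = 0 then 1 else 0 else 0) := by
  simp only [Fmat, Fin.lt_def, swap_val, Fin.ext_iff, Fin.val_zero, Fin.val_one]
  split_ifs <;> first | omega | norm_num

lemma qap_swap (A : Matrix (Fin (m + 2)) (Fin (m + 2)) ℝ) (π : Equiv.Perm (Fin (m + 2))) :
    QAP A (Fmat (m + 2)) (π * Equiv.swap 0 1) =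
      QAP A (Fmat (m + 2)) π + A (π 0) (π 1) - A (π 1) (π 0) := by
  set σ : Equiv.Perm (Fin (m + 2)) := Equiv.swap 0 1 with hσ
  have hre : QAP A (Fmat (m + 2)) (π * σ) = ∑ i, ∑ j, A (π i) (π j) * Fmat (m + 2) (σ i) (σ j) := by
    unfold QAP
    rw [← Equiv.sum_comp σ (fun i => ∑ j, A (π i) (π j) * Fmat (m + 2) (σ i) (σ j))]
    refine Finset.sum_congr rfl fun i _ => ?_
    rw [← Equiv.sum_comp σ (fun j => A (π (σ i)) (π j) * Fmat (m + 2) (σ (σ i)) (σ j))]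
    simp [hσ, Equiv.swap_apply_self, Equiv.Perm.mul_apply]
  rw [hre]
  have key : ∀ i j : Fin (m + 2), A (π i) (π j) * Fmat (m + 2) (σ i) (σ j)
      = A (π i) (π j) * Fmat (m + 2) i j
        + (if j = 1 then if i = 0 then A (π 0) (π 1) else 0 else 0)
        - (if j = 0 then if i = 1 then A (π 1) (π 0) else 0 else 0) := by
    intro i j
    rw [hσ, fmat_swap i j]
    split_ifs <;> simp_all <;> ring
  simp_rw [key]
  simp only [Finset.sum_sub_distrib, Finset.sum_add_distrib]
  simp [QAP, Finset.sum_ite_eq, Finset.sum_ite_eq']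

lemma lap_swap (C : Matrix (Fin (m + 2)) (Fin (m + 2)) ℝ) (π : Equiv.Perm (Fin (m + 2))) :
    LAP C (π * Equiv.swap 0 1) =
      LAP C π + C 0 (π 1) + C 1 (π 0) - C 0 (π 0) - C 1 (π 1) := by
  have hzo : (0 : Fin (m + 2)) ≠ 1 := by simp [Fin.ext_iff]
  have key : ∀ i : Fin (m + 2), C i (π (Equiv.swap 0 1 i)) =
      C i (π i) + (if i = 0 then C 0 (π 1) - C 0 (π 0) else 0)
        + (if i = 1 then C 1 (π 0) - C 1 (π 1) else 0) := by
    intro i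
    rcases eq_or_ne i 0 with rfl | hiz
    · simp [Equiv.swap_apply_left, hzo]
    · rcases eq_or_ne i 1 with rfl | hio
      · simp [Equiv.swap_apply_right, hzo.symm, hiz]
      · rw [Equiv.swap_apply_of_ne_of_ne hiz hio]
        simp [hiz, hio]
  unfold LAP
  simp_rw [Equiv.Perm.mul_apply, key]
  rw [Finset.sum_add_distrib, Finset.sum_add_distrib]
  simp [Finset.sum_ite_eq']
  ring

end Stmt12Aux

open Stmt12Aux in
theorem stmt12 {n : ℕ} (A : Matrix (Fin n) (Fin n) ℝ) :
    Linearizable A (Fmat n) ↔ Balanced3Cycle A := by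
  constructor
  · rintro ⟨C, hC⟩ i j k
    rcases eq_or_ne i j with rfl | hij
    · ring
    rcases eq_or_ne j k with rfl | hjk
    · ring
    rcases eq_or_ne i k with rfl | hik
    · ring
    have hn : 2 ≤ n := by
      have h1 := i.isLt
      have h2 := j.isLt
      have h3 : i.val ≠ j.val := fun h => hij (Fin.ext h)
      omega
    obtain ⟨m, rfl⟩ : ∃ m, n = m + 2 := ⟨n - 2, by omega⟩
    have main : ∀ p q : Fin (m + 2),
        A p q - A q p = (C 1 p - C 0 p) - (C 1 q - C 0 q) := by
      intro p q
      rcases eq_or_ne p q with rfl | hpq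
      · ring
      · set τ : Equiv.Perm (Fin (m + 2)) := Equiv.swap 0 p with hτ
        have hτq : τ q ≠ 0 := by
          intro h
          have h2 := congrArg τ h
          rw [Equiv.swap_apply_self, Equiv.swap_apply_left] at h2
          exact hpq h2.symm
        set π : Equiv.Perm (Fin (m + 2)) := τ * Equiv.swap 1 (τ q) with hπ
        have hπ0 : π 0 = p := by
          rw [hπ]
          have h01 : (0 : Fin (m + 2)) ≠ 1 := by simp [Fin.ext_iff]
          rw [Equiv.Perm.mul_apply, Equiv.swap_apply_of_ne_of_ne h01 (Ne.symm hτq),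
            hτ, Equiv.swap_apply_left]
        have hπ1 : π 1 = q := by
          rw [hπ, Equiv.Perm.mul_apply, Equiv.swap_apply_left, Equiv.swap_apply_self]
        have e1 := hC π
        have e2 := hC (π * Equiv.swap 0 1)
        rw [qap_swap A π, lap_swap C π, hπ0, hπ1] at e2
        linarith
    have h1 := main i j
    have h2 := main j k
    have h3 := main k i
    linarith
  · intro hb
    rcases n with _ | m
    · exact ⟨0, fun π => by simp [QAP, LAP]⟩
    set t : Fin (m + 1) → ℝ := fun p => A p 0 - A 0 p with ht
    have hskew : ∀ p q, A p q - A q p = t p - t q := by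
      intro p q
      have := hb p q 0
      simp only [ht]
      linarith
    set K : ℝ := ((∑ i, ∑ j, A i j) - ∑ i, A i i) / 2 with hK
    refine ⟨fun i p => ((i.val : ℝ) - (m : ℝ) / 2) * t p + (if i = 0 then K else 0),
      fun π => ?_⟩
    have hrow : ∀ i : Fin (m + 1), ∑ j, Fmat (m + 1) i j = (i.val : ℝ) := rowsum
    have hcol : ∀ j : Fin (m + 1), ∑ i, Fmat (m + 1) i j = (m : ℝ) - (j.val : ℝ) := by
      intro j
      have e : ∀ i : Fin (m + 1), Fmat (m + 1) i j
          = 1 - (if i = j then 1 else 0) - Fmat (m + 1) j i := by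
        intro i
        have h := trich i j
        linarith
      rw [Finset.sum_congr rfl fun i _ => e i]
      simp only [Finset.sum_sub_distrib]
      rw [hrow j]
      simp [Finset.sum_ite_eq', Finset.card_univ]
    -- X := ∑ i, ∑ j, A (π i) (π j) * Fmat (m+1) j i
    have habs : QAP A (Fmat (m + 1)) π + (∑ i, ∑ j, A (π i) (π j) * Fmat (m + 1) j i)
        = (∑ i, ∑ j, A i j) - ∑ i, A i i := by
      unfold QAP
      rw [← Finset.sum_add_distrib]
      simp_rw [← Finset.sum_add_distrib]
      have e : ∀ i j : Fin (m + 1),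
          A (π i) (π j) * Fmat (m + 1) i j + A (π i) (π j) * Fmat (m + 1) j i
            = A (π i) (π j) - (if i = j then A (π i) (π j) else 0) := by
        intro i j
        have h2 : Fmat (m + 1) i j + Fmat (m + 1) j i = 1 - (if i = j then 1 else 0) := by
          have := trich i j
          linarith
        calc A (π i) (π j) * Fmat (m + 1) i j + A (π i) (π j) * Fmat (m + 1) j i
            = A (π i) (π j) * (Fmat (m + 1) i j + Fmat (m + 1) j i) := by ring
          _ = A (π i) (π j) * (1 - (if i = j then 1 else 0)) := by rw [h2]
          _ = A (π i) (π j) - (if i = j then A (π i) (π j) else 0) := by split_ifs <;> ring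
      simp_rw [e]
      simp only [Finset.sum_sub_distrib]
      rw [qap_reindex A π]
      congr 1
      have e2 : ∀ i : Fin (m + 1), (∑ j, if i = j then A (π i) (π j) else 0)
          = A (π i) (π i) := fun i => by simp
      rw [Finset.sum_congr rfl fun i _ => e2 i, diag_reindex A π]
    have hX : (∑ i, ∑ j, A (π i) (π j) * Fmat (m + 1) j i)
        = QAP A (Fmat (m + 1)) π + ∑ i, ((m : ℝ) - 2 * (i.val : ℝ)) * t (π i) := by
      have e : ∀ i j : Fin (m + 1), A (π i) (π j) * Fmat (m + 1) j i
          = A (π j) (π i) * Fmat (m + 1) j i + (t (π i) * Fmat (m + 1) j i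
            - t (π j) * Fmat (m + 1) j i) := by
        intro i j
        have h : A (π i) (π j) = A (π j) (π i) + (t (π i) - t (π j)) := by
          have := hskew (π i) (π j)
          linarith
        rw [h]
        ring
      simp_rw [e]
      simp only [Finset.sum_add_distrib, Finset.sum_sub_distrib]
      congr 1
      · -- ∑ i, ∑ j, A (π j) (π i) * F j i = QAP
        rw [Finset.sum_comm]
        rfl
      · -- skew part
        have p1 : ∀ i : Fin (m + 1), ∑ j, t (π i) * Fmat (m + 1) j i
            = ((m : ℝ) - (i.val : ℝ)) * t (π i) := by
          intro i
          rw [← Finset.mul_sum, hcol i]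
          ring
        have p2 : (∑ i, ∑ j, t (π j) * Fmat (m + 1) j i) = ∑ i, (i.val : ℝ) * t (π i) := by
          rw [Finset.sum_comm]
          refine Finset.sum_congr rfl fun j _ => ?_
          rw [← Finset.mul_sum, hrow j]
          ring
        rw [Finset.sum_congr rfl fun i _ => p1 i, p2, ← Finset.sum_sub_distrib]
        exact Finset.sum_congr rfl fun i _ => by ring
    have hL : LAP (fun i p => ((i.val : ℝ) - (m : ℝ) / 2) * t p + (if i = 0 then K else 0)) π
        = (∑ i, ((i.val : ℝ) - (m : ℝ) / 2) * t (π i)) + K := by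
      unfold LAP
      rw [Finset.sum_add_distrib]
      simp [Finset.sum_ite_eq']
    have hrel : (∑ i, ((m : ℝ) - 2 * (i.val : ℝ)) * t (π i))
        = (-2 : ℝ) * ∑ i, ((i.val : ℝ) - (m : ℝ) / 2) * t (π i) := by
      rw [Finset.mul_sum]
      exact Finset.sum_congr rfl fun i _ => by ring
    rw [hL]
    rw [hX] at habs
    rw [hrel] at habs
    rw [hK] at *
    linarith
end

section
/- (Gabovich/Berenguer) For an n×n distance matrix A with n ≥ 3, all cyclic permutations π yield the same tour length Σ_i a_{iπ(i)} if and only if A is a weak sum matrix. -/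
open Finset

private lemma step_ne {n : ℕ} (e : Equiv.Perm (Fin n)) (k x j : Fin n)
    (hjk : j ≠ k) (hjx : e j ≠ x) : (e * Equiv.swap k (e⁻¹ x)) j = e j := by
  have h2 : j ≠ e⁻¹ x := by
    intro h; apply hjx; rw [h]; simp
  rw [Equiv.Perm.mul_apply, Equiv.swap_apply_of_ne_of_ne hjk h2]

private lemma step_eq {n : ℕ} (e : Equiv.Perm (Fin n)) (k x : Fin n) :
    (e * Equiv.swap k (e⁻¹ x)) k = x := by
  rw [Equiv.Perm.mul_apply, Equiv.swap_apply_left]; simp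

private lemma fin_facts {m : ℕ} (hm : 2 ≤ m) :
    ((0:Fin (m+1)) + 1 = 1) ∧ ((1:Fin (m+1)) + 1 = 2) ∧ ((2:Fin (m+1)) + 1 = 3) ∧
    ((0:Fin (m+1)) ≠ 1) ∧ ((0:Fin (m+1)) ≠ 2) ∧ ((1:Fin (m+1)) ≠ 2) ∧
    ((3:Fin (m+1)) ≠ 1) ∧ ((3:Fin (m+1)) ≠ 2) := by
  have e1 : (1:ℕ) % (m+1) = 1 := Nat.mod_eq_of_lt (by omega)
  have e2 : (2:ℕ) % (m+1) = 2 := Nat.mod_eq_of_lt (by omega)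
  have e3 : (3:ℕ) % (m+1) = 0 ∨ (3:ℕ) % (m+1) = 3 := by
    rcases Nat.lt_or_ge 3 (m+1) with h | h
    · right; exact Nat.mod_eq_of_lt h
    · left; have hm2 : m = 2 := by omega
      subst hm2; rfl
  refine ⟨?_, ?_, ?_, ?_, ?_, ?_, ?_, ?_⟩ <;>
    rcases e3 with h3 | h3 <;>
    simp [Fin.ext_iff, Fin.val_add, Fin.coe_ofNat_eq_mod, e1, e2, h3]

private lemma exists_perm3 {m : ℕ} (hm : 2 ≤ m) (a b c : Fin (m+1))
    (hab : a ≠ b) (hac : a ≠ c) (hbc : b ≠ c) :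
    ∃ e : Equiv.Perm (Fin (m+1)), e 0 = a ∧ e 1 = b ∧ e 2 = c := by
  obtain ⟨a1, a2, a3, d01, d02, d12, d31, d32⟩ := fin_facts hm
  set e1 : Equiv.Perm (Fin (m+1)) := Equiv.swap 0 a with he1
  have h10 : e1 0 = a := by simp [he1]
  set e2 : Equiv.Perm (Fin (m+1)) := e1 * Equiv.swap 1 (e1⁻¹ b) with he2
  have h21 : e2 1 = b := step_eq e1 1 b
  have h20 : e2 0 = a := by rw [he2, step_ne e1 1 b 0 d01 (by rw [h10]; exact hab), h10]
  set e3 : Equiv.Perm (Fin (m+1)) := e2 * Equiv.swap 2 (e2⁻¹ c) with he3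
  have h32 : e3 2 = c := step_eq e2 2 c
  have h30 : e3 0 = a := by rw [he3, step_ne e2 2 c 0 d02 (by rw [h20]; exact hac), h20]
  have h31 : e3 1 = b := by rw [he3, step_ne e2 2 c 1 d12 (by rw [h21]; exact hbc), h21]
  exact ⟨e3, h30, h31, h32⟩

private lemma exists_perm4 {m : ℕ} (hm : 3 ≤ m) (a b c d : Fin (m+1))
    (hab : a ≠ b) (hac : a ≠ c) (had : a ≠ d) (hbc : b ≠ c) (hbd : b ≠ d) (hcd : c ≠ d) :
    ∃ e : Equiv.Perm (Fin (m+1)), e 0 = a ∧ e 1 = b ∧ e 2 = c ∧ e 3 = d := by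
  obtain ⟨e0, h00, h01, h02⟩ := exists_perm3 (by omega) a b c hab hac hbc
  have e1' : (1:ℕ) % (m+1) = 1 := Nat.mod_eq_of_lt (by omega)
  have e2' : (2:ℕ) % (m+1) = 2 := Nat.mod_eq_of_lt (by omega)
  have e3' : (3:ℕ) % (m+1) = 3 := Nat.mod_eq_of_lt (by omega)
  have d03 : (0:Fin (m+1)) ≠ 3 := by
    simp [ne_eq, Fin.ext_iff, Fin.coe_ofNat_eq_mod, e3']
  have d13 : (1:Fin (m+1)) ≠ 3 := by
    simp [ne_eq, Fin.ext_iff, Fin.coe_ofNat_eq_mod, e1', e3']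
  have d23 : (2:Fin (m+1)) ≠ 3 := by
    simp [ne_eq, Fin.ext_iff, Fin.coe_ofNat_eq_mod, e2', e3']
  set e4 : Equiv.Perm (Fin (m+1)) := e0 * Equiv.swap 3 (e0⁻¹ d) with he4
  have h43 : e4 3 = d := step_eq e0 3 d
  have h40 : e4 0 = a := by rw [he4, step_ne e0 3 d 0 d03 (by rw [h00]; exact had), h00]
  have h41 : e4 1 = b := by rw [he4, step_ne e0 3 d 1 d13 (by rw [h01]; exact hbd), h01]
  have h42 : e4 2 = c := by rw [he4, step_ne e0 3 d 2 d23 (by rw [h02]; exact hcd), h02]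
  exact ⟨e4, h40, h41, h42, h43⟩

private lemma master {m : ℕ} (hm : 2 ≤ m) (A : Matrix (Fin (m+1)) (Fin (m+1)) ℝ) (c : ℝ)
    (h : ∀ e : Equiv.Perm (Fin (m+1)), ∑ t, A (e t) (e (t+1)) = c)
    (e : Equiv.Perm (Fin (m+1))) :
    A (e 0) (e 1) + A (e 1) (e 2) + A (e 2) (e 3)
      = A (e 0) (e 2) + A (e 2) (e 1) + A (e 1) (e 3) := by
  obtain ⟨a1, a2, a3, d01, d02, d12, d31, d32⟩ := fin_facts hm
  set e' : Equiv.Perm (Fin (m+1)) := e * Equiv.swap 1 2 with he'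
  have key : ∀ g : Fin (m+1) → ℝ,
      ∑ t, g t = ∑ t ∈ univ \ ({0,1,2} : Finset (Fin (m+1))), g t + (g 0 + g 1 + g 2) := by
    intro g
    rw [← Finset.sum_sdiff (Finset.subset_univ ({0,1,2} : Finset (Fin (m+1)))),
      Finset.sum_insert (by simp [d01, d02]), Finset.sum_insert (by simp [d12]),
      Finset.sum_singleton]
    ring
  have h1 := h e
  have h2 := h e'
  rw [key] at h1 h2
  have hsame : ∑ t ∈ univ \ ({0,1,2} : Finset (Fin (m+1))), A (e' t) (e' (t+1))
      = ∑ t ∈ univ \ ({0,1,2} : Finset (Fin (m+1))), A (e t) (e (t+1)) := by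
    apply Finset.sum_congr rfl
    intro t ht
    simp only [Finset.mem_sdiff, Finset.mem_insert, Finset.mem_singleton, Finset.mem_univ,
      true_and, not_or] at ht
    obtain ⟨ht0, ht1, ht2⟩ := ht
    have hs1 : Equiv.swap (1:Fin (m+1)) 2 t = t := Equiv.swap_apply_of_ne_of_ne ht1 ht2
    have hu1 : t + 1 ≠ 1 := by
      intro hh; apply ht0; have h' : t + 1 = 0 + 1 := by rw [hh, a1]
      exact add_right_cancel h'
    have hu2 : t + 1 ≠ 2 := by
      intro hh; apply ht1; have h' : t + 1 = 1 + 1 := by rw [hh, a2]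
      exact add_right_cancel h'
    have hs2 : Equiv.swap (1:Fin (m+1)) 2 (t+1) = t+1 := Equiv.swap_apply_of_ne_of_ne hu1 hu2
    rw [he']
    simp only [Equiv.Perm.mul_apply, hs1, hs2]
  rw [hsame] at h2
  have v0 : e' 0 = e 0 := by
    rw [he']; simp only [Equiv.Perm.mul_apply, Equiv.swap_apply_of_ne_of_ne d01 d02]
  have v1 : e' 1 = e 2 := by rw [he']; simp [Equiv.Perm.mul_apply]
  have v2 : e' 2 = e 1 := by rw [he']; simp [Equiv.Perm.mul_apply]
  have v3 : e' 3 = e 3 := by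
    rw [he']; simp only [Equiv.Perm.mul_apply, Equiv.swap_apply_of_ne_of_ne d31 d32]
  rw [a1, a2, a3] at h1 h2
  rw [v0, v1, v2, v3] at h2
  linarith

theorem stmt16 {n : ℕ} (hn : 3 ≤ n) (A : Matrix (Fin n) (Fin n) ℝ) :
    (∃ c : ℝ, ∀ π : Equiv.Perm (Fin n), π.IsCycle → π.support = Finset.univ →
        ∑ i, A i (π i) = c) ↔
    (∃ α β : Fin n → ℝ, ∀ i j, i ≠ j → A i j = α i + β j) := by
  obtain ⟨m, rfl⟩ : ∃ m, n = m + 1 := ⟨n - 1, by omega⟩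
  have hm : 2 ≤ m := by omega
  obtain ⟨a1, a2, a3, d01, d02, d12, d31, d32⟩ := fin_facts hm
  constructor
  · rintro ⟨c, hc⟩
    have hS : ∀ e : Equiv.Perm (Fin (m+1)), ∑ t, A (e t) (e (t+1)) = c := by
      intro e
      have hcyc : (e * finRotate (m+1) * e⁻¹).IsCycle :=
        (isCycle_finRotate_of_le (by omega)).conj
      have hsup : (e * finRotate (m+1) * e⁻¹).support = Finset.univ := by
        rw [Equiv.Perm.support_conj, support_finRotate_of_le (by omega)]
        exact Finset.map_univ_equiv _
      have hval := hc _ hcyc hsup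
      rw [← hval, ← Equiv.sum_comp e (fun i => A i ((e * finRotate (m+1) * e⁻¹) i))]
      apply Finset.sum_congr rfl
      intro t _
      congr 1
      simp [Equiv.Perm.mul_apply]
    have hM : ∀ w x y z : Fin (m+1), w ≠ x → w ≠ y → w ≠ z → x ≠ y → x ≠ z → y ≠ z →
        A w x + A x y + A y z = A w y + A y x + A x z := by
      intro w x y z hwx hwy hwz hxy hxz hyz
      have hm4 : 3 ≤ m := by
        by_contra hcon
        have hm2 : m = 2 := by omega
        subst hm2
        have hinj : Function.Injective ![w, x, y, z] := by
          intro i j hij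
          fin_cases i <;> fin_cases j <;> simp_all
        have hcard := Fintype.card_le_of_injective _ hinj
        simp at hcard
      obtain ⟨e, h0, h1, h2, h3⟩ := exists_perm4 hm4 w x y z hwx hwy hwz hxy hxz hyz
      have hme := master hm A c hS e
      rw [h0, h1, h2, h3] at hme
      linarith
    have hT : ∀ x y z : Fin (m+1), x ≠ y → x ≠ z → y ≠ z →
        A x y + A y z + A z x = A y x + A z y + A x z := by
      intro x y z hxy hxz hyz
      by_cases hex : ∃ w : Fin (m+1), w ≠ x ∧ w ≠ y ∧ w ≠ z
      · obtain ⟨w, hwx, hwy, hwz⟩ := hex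
        have m1 := hM w x y z hwx hwy hwz hxy hxz hyz
        have m2 := hM w y z x hwy hwz hwx hyz (Ne.symm hxy) (Ne.symm hxz)
        have m3 := hM w x z y hwx hwz hwy hxz hxy (Ne.symm hyz)
        linarith
      · push_neg at hex
        have hm2 : m = 2 := by
          by_contra hcon
          have hsub : (Finset.univ : Finset (Fin (m+1))) ⊆ {x, y, z} := by
            intro w _
            by_cases h1 : w = x
            · simp [h1]
            by_cases h2 : w = y
            · simp [h2]
            have h3 := hex w h1 h2
            simp [h3]
          have hcard := Finset.card_le_card hsub
          have hle : ({x, y, z} : Finset (Fin (m+1))).card ≤ 3 := by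
            apply le_trans (Finset.card_insert_le _ _)
            have h4 := Finset.card_insert_le y ({z} : Finset (Fin (m+1)))
            simp only [Finset.card_singleton] at h4
            omega
          simp only [Finset.card_univ, Fintype.card_fin] at hcard
          omega
        obtain ⟨e, h0, h1, h2⟩ := exists_perm3 hm x y z hxy hxz hyz
        have h30 : (3 : Fin (m+1)) = 0 := by subst hm2; decide
        have hme := master hm A c hS e
        rw [h0, h1, h2, h30, h0] at hme
        linarith
    have hR : ∀ a b c' d : Fin (m+1), a ≠ b → a ≠ c' → a ≠ d → b ≠ c' → b ≠ d → c' ≠ d →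
        A a b + A c' d = A a d + A c' b := by
      intro a b e d hab hac had hbc hbd hcd
      have m1 := hM a b e d hab hac had hbc hbd hcd
      have m2 := hM a b d e hab had hac hbd hbc (Ne.symm hcd)
      have m3 := hM a e d b hac had hab hcd (Ne.symm hbc) (Ne.symm hbd)
      linarith
    refine ⟨(fun i => if i = 0 then 0 else if i = 1 then A 1 2 - A 0 2 else A i 1 - A 0 1),
      (fun j => if j = 0 then A 1 0 - A 1 2 + A 0 2 else A 0 j), ?_⟩
    intro i j hij
    dsimp only
    have hT0 := hT 0 1 2 d01 d02 d12
    by_cases hi0 : i = 0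
    · subst hi0
      rw [if_pos rfl, if_neg (Ne.symm hij)]
      ring
    by_cases hi1 : i = 1
    · subst hi1
      rw [if_neg (Ne.symm d01), if_pos rfl]
      by_cases hj0 : j = 0
      · subst hj0; rw [if_pos rfl]; ring
      rw [if_neg hj0]
      by_cases hj2 : j = 2
      · subst hj2; ring
      · have hr := hR 1 j 0 2 hij (Ne.symm d01) d12 hj0 hj2 d02
        linarith
    rw [if_neg hi0, if_neg hi1]
    by_cases hj0 : j = 0
    · subst hj0
      rw [if_pos rfl]
      by_cases hi2 : i = 2
      · subst hi2; linarith
      · have hr := hR i 0 2 1 hi0 hi2 hi1 d02 d01 (Ne.symm d12)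
        linarith
    rw [if_neg hj0]
    by_cases hj1 : j = 1
    · subst hj1; ring
    by_cases hj2 : j = 2
    · subst hj2
      have hr := hR i 2 0 1 hij hi0 hi1 (Ne.symm d02) (Ne.symm d12) d01
      linarith
    · have hr := hR i j 0 1 hij hi0 hi1 hj0 hj1 d01
      linarith
  · rintro ⟨α, β, hab⟩
    refine ⟨∑ i, α i + ∑ i, β i, ?_⟩
    intro π hcyc hsup
    have hfix : ∀ i, π i ≠ i := by
      intro i
      have hmem : i ∈ π.support := by rw [hsup]; exact Finset.mem_univ i
      exact Equiv.Perm.mem_support.mp hmem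
    have hsum : ∑ i, A i (π i) = ∑ i, (α i + β (π i)) := by
      apply Finset.sum_congr rfl
      intro i _
      exact hab i (π i) (Ne.symm (hfix i))
    rw [hsum, Finset.sum_add_distrib]
    congr 1
    exact Equiv.sum_comp π β
end

section
/- For any n×n matrices A and C, any permutation π, and the Hamiltonian cycle matrix H_n: (i) QAP(A, H_n, π^[k]) = QAP(A, H_n, π) for every cyclic shift π^[k] of π, and (ii) Σ_{k=0}^{n−1} LAP(C, π^[k]) = Σ_{i=1}^n Σ_{j=1}^n c_{ij}. -/
/-! `Hmat n` is the permutation matrix of the rotation `i ↦ i + 1`, so it is unchanged when its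
rows and columns are rotated simultaneously; reindexing the QAP double sum by the rotation shows
that each cyclic shift leaves the objective unchanged. For the LAP sum, the `n` shifts send row
`i` to the columns `π (i + k)`, which run through every column exactly once. -/

open Finset

theorem QAP_mul_of_invariant {n : ℕ} (A B : Matrix (Fin n) (Fin n) ℝ)
    (π σ : Equiv.Perm (Fin n)) (hB : ∀ i j, B (σ i) (σ j) = B i j) :
    QAP A B (π * σ) = QAP A B π := by
  unfold QAP
  exact Fintype.sum_equiv σ _ _ fun i => Fintype.sum_equiv σ _ _ fun j => by rw [hB]; rfl

theorem QAP_mul_pow_of_invariant {n : ℕ} (A B : Matrix (Fin n) (Fin n) ℝ)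
    (π σ : Equiv.Perm (Fin n)) (hB : ∀ i j, B (σ i) (σ j) = B i j) (k : ℕ) :
    QAP A B (π * σ ^ k) = QAP A B π := by
  induction k with
  | zero => simp
  | succ k ih => rw [pow_succ, ← mul_assoc, QAP_mul_of_invariant A B _ σ hB, ih]

theorem sum_LAP_of_bijective {n : ℕ} {ι : Type*} [Fintype ι] (C : Matrix (Fin n) (Fin n) ℝ)
    (τ : ι → Equiv.Perm (Fin n)) (hτ : ∀ i, Function.Bijective fun k => τ k i) :
    ∑ k, LAP C (τ k) = ∑ i, ∑ j, C i j := by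
  unfold LAP
  rw [Finset.sum_comm]
  exact Finset.sum_congr rfl fun i _ => (hτ i).sum_comp (C i)

theorem Hmat_apply {n : ℕ} (i j : Fin n) : Hmat n i j = if j = finRotate n i then 1 else 0 := by
  have := i.neZero
  simp [Hmat, Fin.ext_iff, Fin.val_add]

theorem Hmat_finRotate_finRotate {n : ℕ} (i j : Fin n) :
    Hmat n (finRotate n i) (finRotate n j) = Hmat n i j := by
  simp only [Hmat_apply, (finRotate n).apply_eq_iff_eq]

theorem finRotate_pow_val_apply {n : ℕ} (k i : Fin n) : (finRotate n ^ (k : ℕ)) i = i + k := by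
  rw [Equiv.Perm.coe_pow, ← finCycle_eq_finRotate_iterate, finCycle_apply]

theorem stmt17 {n : ℕ} (A C : Matrix (Fin n) (Fin n) ℝ) (π : Equiv.Perm (Fin n)) :
    (∀ k : ℕ, QAP A (Hmat n) (π * (finRotate n) ^ k) = QAP A (Hmat n) π) ∧
    (∑ k ∈ Finset.range n, LAP C (π * (finRotate n) ^ k)) = ∑ i, ∑ j, C i j := by
  refine ⟨QAP_mul_pow_of_invariant A _ π _ Hmat_finRotate_finRotate, ?_⟩
  rw [← Fin.sum_univ_eq_sum_range fun k => LAP C (π * finRotate n ^ k)]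
  refine sum_LAP_of_bijective C _ fun i => ?_
  have := i.neZero
  simp only [Equiv.Perm.mul_apply, finRotate_pow_val_apply]
  exact π.bijective.comp (Equiv.addLeft i).bijective
end

section
/- The TSP-QAP for an n×n matrix A (with n ≥ 3) is linearizable if and only if A is a weak sum matrix. -/
open Finset

/-! ### Auxiliary material -/

/-- The tour cost of the permutation `π`. -/
def Ksum {n : ℕ} [NeZero n] (A : Matrix (Fin n) (Fin n) ℝ) (π : Equiv.Perm (Fin n)) : ℝ :=
  ∑ i, A (π i) (π (i + 1))

section Aux

variable {n : ℕ} [NeZero n] (A : Matrix (Fin n) (Fin n) ℝ)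

lemma qap_hmat (π : Equiv.Perm (Fin n)) : QAP A (Hmat n) π = Ksum A π := by
  unfold QAP Hmat Ksum
  refine Finset.sum_congr rfl fun i _ => ?_
  have key : ∀ j : Fin n, ((j : ℕ) = ((i : ℕ) + 1) % n) ↔ j = i + 1 := fun j => by
    rw [Fin.ext_iff, Fin.val_add, show ((1 : Fin n) : ℕ) = 1 % n from rfl, Nat.add_mod_mod]
  simp [key, mul_ite]

lemma ksum_rot (π : Equiv.Perm (Fin n)) (k : Fin n) :
    Ksum A ((Equiv.addRight k).trans π) = Ksum A π := by
  unfold Ksum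
  apply Fintype.sum_equiv (Equiv.addRight k)
  intro i
  simp only [Equiv.trans_apply, Equiv.coe_addRight]
  rw [add_right_comm]

lemma lap_const (C : Matrix (Fin n) (Fin n) ℝ)
    (hC : ∀ π : Equiv.Perm (Fin n), QAP A (Hmat n) π = LAP C π)
    (π π' : Equiv.Perm (Fin n)) : LAP C π = LAP C π' := by
  have hrot : ∀ (σ : Equiv.Perm (Fin n)) (k : Fin n),
      LAP C ((Equiv.addRight k).trans σ) = LAP C σ := by
    intro σ k
    rw [← hC, ← hC, qap_hmat, qap_hmat, ksum_rot]
  have htot : ∀ σ : Equiv.Perm (Fin n), (n : ℝ) * LAP C σ = ∑ i, ∑ j, C i j := by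
    intro σ
    have h1 : ∑ k : Fin n, LAP C ((Equiv.addRight k).trans σ) = (n : ℝ) * LAP C σ := by
      simp [hrot, Finset.sum_const, mul_comm]
    rw [← h1]
    unfold LAP
    rw [Finset.sum_comm]
    refine Finset.sum_congr rfl fun i _ => ?_
    have h2 : ∑ k : Fin n, C i (σ ((Equiv.addLeft i) k)) = ∑ j, C i (σ j) :=
      Equiv.sum_comp (Equiv.addLeft i) fun j => C i (σ j)
    simp only [Equiv.coe_addLeft] at h2
    rw [show (∑ k : Fin n, C i (((Equiv.addRight k).trans σ) i))
        = ∑ k : Fin n, C i (σ (i + k)) from rfl, h2,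
      Equiv.sum_comp σ (fun j => C i j)]
  have := (htot π).trans (htot π').symm
  have hn0 : (n : ℝ) ≠ 0 := Nat.cast_ne_zero.2 (NeZero.ne n)
  exact mul_left_cancel₀ hn0 this

lemma ksum_const (C : Matrix (Fin n) (Fin n) ℝ)
    (hC : ∀ π : Equiv.Perm (Fin n), QAP A (Hmat n) π = LAP C π)
    (π π' : Equiv.Perm (Fin n)) : Ksum A π = Ksum A π' := by
  rw [← qap_hmat, ← qap_hmat, hC, hC]
  exact lap_const A C hC π π'

end Aux

section Numerals

variable {n : ℕ} [NeZero n]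

lemma fin_lit_ne (a b : ℕ) {x y : Fin n} (hx : (x : ℕ) = a % n) (hy : (y : ℕ) = b % n)
    (ha : a < n) (hb : b < n) (hab : a ≠ b) : x ≠ y := by
  intro h
  rw [Fin.ext_iff, hx, hy, Nat.mod_eq_of_lt ha, Nat.mod_eq_of_lt hb] at h
  exact hab h

lemma fin_lit_add_one (a b : ℕ) {x y : Fin n} (hx : (x : ℕ) = a % n) (hy : (y : ℕ) = b % n)
    (hb : b < n) (hab : a + 1 = b) : x + 1 = y := by
  apply Fin.ext
  rw [Fin.val_add, hx, hy, show ((1 : Fin n) : ℕ) = 1 % n from rfl, Nat.add_mod_mod,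
    Nat.mod_add_mod, hab]

lemma fin_ne_add_one (h2 : 2 ≤ n) (i : Fin n) : i ≠ i + 1 := by
  intro h
  have h0 : (0 : Fin n) = 1 := by
    have := add_left_cancel (a := i) (b := 0) (c := 1) (by rw [add_zero, ← h])
    exact this
  rw [Fin.ext_iff, show ((0 : Fin n) : ℕ) = 0 from rfl,
    show ((1 : Fin n) : ℕ) = 1 % n from rfl, Nat.mod_eq_of_lt (by omega)] at h0
  exact absurd h0 (by omega)

end Numerals

section Identities

variable {n : ℕ} [NeZero n] (A : Matrix (Fin n) (Fin n) ℝ)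

/-- Extension of four distinct prescribed values to a permutation. -/
lemma exists_perm_four (h4 : 4 ≤ n) (x u v y : Fin n)
    (hxu : x ≠ u) (hxv : x ≠ v) (hxy : x ≠ y) (huv : u ≠ v) (huy : u ≠ y) (hvy : v ≠ y) :
    ∃ π : Equiv.Perm (Fin n), π 0 = x ∧ π 1 = u ∧ π 2 = v ∧ π 3 = y := by
  have e01 : (0 : Fin n) ≠ 1 := fin_lit_ne 0 1 rfl rfl (by omega) (by omega) (by omega)
  have e02 : (0 : Fin n) ≠ 2 := fin_lit_ne 0 2 rfl rfl (by omega) (by omega) (by omega)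
  have e03 : (0 : Fin n) ≠ 3 := fin_lit_ne 0 3 rfl rfl (by omega) (by omega) (by omega)
  have e12 : (1 : Fin n) ≠ 2 := fin_lit_ne 1 2 rfl rfl (by omega) (by omega) (by omega)
  have e13 : (1 : Fin n) ≠ 3 := fin_lit_ne 1 3 rfl rfl (by omega) (by omega) (by omega)
  have e23 : (2 : Fin n) ≠ 3 := fin_lit_ne 2 3 rfl rfl (by omega) (by omega) (by omega)
  set p0 : Equiv.Perm (Fin n) := Equiv.swap 0 x with hp0
  have h00 : p0 0 = x := Equiv.swap_apply_left 0 x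
  set p1 : Equiv.Perm (Fin n) := (Equiv.swap (p0 1) u) * p0 with hp1
  have h10 : p1 0 = x := by
    rw [hp1]
    simp only [Equiv.Perm.mul_apply, h00]
    exact Equiv.swap_apply_of_ne_of_ne (h00 ▸ fun h => e01 (p0.injective h)) hxu
  have h11 : p1 1 = u := by
    rw [hp1]; simp only [Equiv.Perm.mul_apply]; exact Equiv.swap_apply_left _ _
  set p2 : Equiv.Perm (Fin n) := (Equiv.swap (p1 2) v) * p1 with hp2
  have h20 : p2 0 = x := by
    rw [hp2]
    simp only [Equiv.Perm.mul_apply, h10]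
    exact Equiv.swap_apply_of_ne_of_ne (h10 ▸ fun h => e02 (p1.injective h)) hxv
  have h21 : p2 1 = u := by
    rw [hp2]
    simp only [Equiv.Perm.mul_apply, h11]
    exact Equiv.swap_apply_of_ne_of_ne (h11 ▸ fun h => e12 (p1.injective h)) huv
  have h22 : p2 2 = v := by
    rw [hp2]; simp only [Equiv.Perm.mul_apply]; exact Equiv.swap_apply_left _ _
  refine ⟨(Equiv.swap (p2 3) y) * p2, ?_, ?_, ?_, ?_⟩
  · simp only [Equiv.Perm.mul_apply, h20]
    exact Equiv.swap_apply_of_ne_of_ne (h20 ▸ fun h => e03 (p2.injective h)) hxy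
  · simp only [Equiv.Perm.mul_apply, h21]
    exact Equiv.swap_apply_of_ne_of_ne (h21 ▸ fun h => e13 (p2.injective h)) huy
  · simp only [Equiv.Perm.mul_apply, h22]
    exact Equiv.swap_apply_of_ne_of_ne (h22 ▸ fun h => e23 (p2.injective h)) hvy
  · simp only [Equiv.Perm.mul_apply]
    exact Equiv.swap_apply_left _ _

/-- The adjacent-transposition identity. -/
lemma lemS (h4 : 4 ≤ n) (hK : ∀ π π' : Equiv.Perm (Fin n), Ksum A π = Ksum A π')
    (π : Equiv.Perm (Fin n)) :
    A (π 0) (π 2) + A (π 2) (π 1) + A (π 1) (π 3)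
      = A (π 0) (π 1) + A (π 1) (π 2) + A (π 2) (π 3) := by
  have e01 : (0 : Fin n) ≠ 1 := fin_lit_ne 0 1 rfl rfl (by omega) (by omega) (by omega)
  have e02 : (0 : Fin n) ≠ 2 := fin_lit_ne 0 2 rfl rfl (by omega) (by omega) (by omega)
  have e12 : (1 : Fin n) ≠ 2 := fin_lit_ne 1 2 rfl rfl (by omega) (by omega) (by omega)
  have a0 : (0 : Fin n) + 1 = 1 := fin_lit_add_one 0 1 rfl rfl (by omega) (by omega)
  have a1 : (1 : Fin n) + 1 = 2 := fin_lit_add_one 1 2 rfl rfl (by omega) (by omega)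
  have a2 : (2 : Fin n) + 1 = 3 := fin_lit_add_one 2 3 rfl rfl (by omega) (by omega)
  set τ : Equiv.Perm (Fin n) := Equiv.swap 1 2 with hτ
  have hτ0 : τ 0 = 0 := Equiv.swap_apply_of_ne_of_ne e01 e02
  have hτ1 : τ 1 = 2 := Equiv.swap_apply_left 1 2
  have hτ2 : τ 2 = 1 := Equiv.swap_apply_right 1 2
  have h := hK (τ.trans π) π
  unfold Ksum at h
  simp only [Equiv.trans_apply] at h
  set F : Fin n → ℝ := fun i => A (π (τ i)) (π (τ (i + 1))) - A (π i) (π (i + 1)) with hF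
  have hsum : ∑ i, F i = 0 := by
    rw [hF]
    rw [Finset.sum_sub_distrib, h, sub_self]
  have hsub : ∀ i ∈ (Finset.univ : Finset (Fin n)),
      i ∉ ({0, 1, 2} : Finset (Fin n)) → F i = 0 := by
    intro i _ hi
    simp only [Finset.mem_insert, Finset.mem_singleton, not_or] at hi
    obtain ⟨hi0, hi1, hi2⟩ := hi
    have hs1 : τ i = i := Equiv.swap_apply_of_ne_of_ne hi1 hi2
    have hs2 : τ (i + 1) = i + 1 := by
      apply Equiv.swap_apply_of_ne_of_ne
      · exact fun hh => hi0 (add_right_cancel (b := (1 : Fin n)) (by rw [hh, a0]))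
      · exact fun hh => hi1 (add_right_cancel (b := (1 : Fin n)) (by rw [hh, a1]))
    rw [hF]
    simp only [hs1, hs2, sub_self]
  have hexp : ∑ i ∈ ({0, 1, 2} : Finset (Fin n)), F i = 0 := by
    rw [Finset.sum_subset (Finset.subset_univ _) hsub, hsum]
  have hmem : ∑ i ∈ ({0, 1, 2} : Finset (Fin n)), F i = F 0 + F 1 + F 2 := by
    rw [show ({0, 1, 2} : Finset (Fin n)) = insert 0 (insert 1 {2}) from rfl]
    rw [Finset.sum_insert (by simp [e01, e02]), Finset.sum_insert (by simp [e12]),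
      Finset.sum_singleton]
    ring
  rw [hmem] at hexp
  have hF0 : F 0 = A (π 0) (π 2) - A (π 0) (π 1) := by rw [hF]; simp [a0, hτ0, hτ1]
  have hF1 : F 1 = A (π 2) (π 1) - A (π 1) (π 2) := by rw [hF]; simp [a1, hτ1, hτ2]
  have hF2 : F 2 = A (π 1) (π 3) - A (π 2) (π 3) := by
    rw [hF]; simp only [a2, hτ2]
    rw [Equiv.swap_apply_of_ne_of_ne
      (Ne.symm (fin_lit_ne 1 3 rfl rfl (by omega) (by omega) (by omega)))
      (Ne.symm (fin_lit_ne 2 3 rfl rfl (by omega) (by omega) (by omega)))]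
  rw [hF0, hF1, hF2] at hexp
  linarith

/-- Vertex form of the adjacent-transposition identity. -/
lemma lemSv (h4 : 4 ≤ n) (hK : ∀ π π' : Equiv.Perm (Fin n), Ksum A π = Ksum A π')
    (x u v y : Fin n)
    (hxu : x ≠ u) (hxv : x ≠ v) (hxy : x ≠ y) (huv : u ≠ v) (huy : u ≠ y) (hvy : v ≠ y) :
    A x v + A v u + A u y = A x u + A u v + A v y := by
  obtain ⟨π, h0, h1, h2, h3⟩ := exists_perm_four h4 x u v y hxu hxv hxy huv huy hvy
  have := lemS A h4 hK π
  rw [h0, h1, h2, h3] at this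
  exact this

/-- The quadrangle identity. -/
lemma lemQ (h4 : 4 ≤ n) (hK : ∀ π π' : Equiv.Perm (Fin n), Ksum A π = Ksum A π')
    (a b c d : Fin n)
    (hab : a ≠ b) (hac : a ≠ c) (had : a ≠ d) (hbc : b ≠ c) (hbd : b ≠ d) (hcd : c ≠ d) :
    A a c + A b d = A a d + A b c := by
  have h1 := lemSv A h4 hK a b c d hab hac had hbc hbd hcd
  have h2 := lemSv A h4 hK a b d c hab had hac hbd hbc hcd.symm
  have h3 := lemSv A h4 hK a c d b hac had hab hcd hbc.symm hbd.symm
  linarith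

end Identities

section Assemble

variable {n : ℕ} [NeZero n] (A : Matrix (Fin n) (Fin n) ℝ)

lemma assemble (h3 : 3 ≤ n)
    (hB : A 0 2 + A 2 1 + A 1 0 = A 2 0 + A 1 2 + A 0 1)
    (hQ : ∀ a b c d : Fin n, a ≠ b → a ≠ c → a ≠ d → b ≠ c → b ≠ d → c ≠ d →
      A a c + A b d = A a d + A b c) :
    ∃ α β : Fin n → ℝ, ∀ i j, i ≠ j → A i j = α i + β j := by
  have e01 : (0 : Fin n) ≠ 1 := fin_lit_ne 0 1 rfl rfl (by omega) (by omega) (by omega)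
  have e02 : (0 : Fin n) ≠ 2 := fin_lit_ne 0 2 rfl rfl (by omega) (by omega) (by omega)
  have e12 : (1 : Fin n) ≠ 2 := fin_lit_ne 1 2 rfl rfl (by omega) (by omega) (by omega)
  refine ⟨fun i => if i = 0 then 0 else A i 0 - (A 1 0 + A 0 2 - A 1 2),
    fun j => if j = 0 then A 1 0 + A 0 2 - A 1 2 else A 0 j, ?_⟩
  intro i j hij
  dsimp only
  by_cases hi : i = 0
  · subst hi
    rw [if_pos rfl, if_neg (Ne.symm hij)]
    ring
  by_cases hj : j = 0
  · subst hj
    rw [if_neg hi, if_pos rfl]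
    ring
  rw [if_neg hi, if_neg hj]
  by_cases hi1 : i = 1
  · subst hi1
    by_cases hj2 : j = 2
    · subst hj2; ring
    · have hq := hQ 1 0 j 2 e01.symm hij e12 (Ne.symm hj) e02 hj2
      linarith
  by_cases hi2 : i = 2
  · subst hi2
    by_cases hj1 : j = 1
    · subst hj1; linarith
    · have hq1 := hQ 2 1 j 0 e12.symm hij e02.symm (Ne.symm hj1) e01.symm hj
      have hq2 := hQ 1 0 j 2 e01.symm (Ne.symm hj1) e12 (Ne.symm hj) e02 (Ne.symm hij)
      linarith
  -- now i ∉ {0, 1, 2}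
  by_cases hj1 : j = 1
  · subst hj1
    have hq1 := hQ i 0 1 2 hi hij hi2 e01 e02 e12
    have hq2 := hQ i 1 2 0 hij hi2 hi e12 e01.symm e02.symm
    linarith
  by_cases hj2 : j = 2
  · subst hj2
    have hq := hQ i 1 2 0 hi1 hij hi e12 e01.symm e02.symm
    linarith
  · have hq1 := hQ i 1 j 0 hi1 hij hi (Ne.symm hj1) e01.symm hj
    have hq2 := hQ 1 0 j 2 e01.symm (Ne.symm hj1) e12 (Ne.symm hj) e02 hj2
    linarith

end Assemble

theorem stmt18 {n : ℕ} (hn : 3 ≤ n) (A : Matrix (Fin n) (Fin n) ℝ) :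
    Linearizable A (Hmat n) ↔
    (∃ α β : Fin n → ℝ, ∀ i j, i ≠ j → A i j = α i + β j) := by
  haveI : NeZero n := ⟨by omega⟩
  constructor
  · rintro ⟨C, hC⟩
    have hK : ∀ π π' : Equiv.Perm (Fin n), Ksum A π = Ksum A π' := ksum_const A C hC
    by_cases h4 : 4 ≤ n
    · apply assemble A hn
      · -- B from S and Q
        have e03 : (0 : Fin n) ≠ 3 := fin_lit_ne 0 3 rfl rfl (by omega) (by omega) (by omega)
        have e01 : (0 : Fin n) ≠ 1 := fin_lit_ne 0 1 rfl rfl (by omega) (by omega) (by omega)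
        have e02 : (0 : Fin n) ≠ 2 := fin_lit_ne 0 2 rfl rfl (by omega) (by omega) (by omega)
        have e12 : (1 : Fin n) ≠ 2 := fin_lit_ne 1 2 rfl rfl (by omega) (by omega) (by omega)
        have e13 : (1 : Fin n) ≠ 3 := fin_lit_ne 1 3 rfl rfl (by omega) (by omega) (by omega)
        have e23 : (2 : Fin n) ≠ 3 := fin_lit_ne 2 3 rfl rfl (by omega) (by omega) (by omega)
        have hS := lemSv A h4 hK 1 0 2 3 e01.symm e12 e13 e02 e03 e23
        have hq := lemQ A h4 hK 2 0 3 1 e02.symm e23 e12.symm e03 e01 e13.symm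
        linarith
      · intro a b c d hab hac had hbc hbd hcd
        exact lemQ A h4 hK a b c d hab hac had hbc hbd hcd
    · have hn3 : n = 3 := by omega
      subst hn3
      apply assemble A hn
      · have h := hK (Equiv.swap 1 2) (Equiv.refl (Fin 3))
        unfold Ksum at h
        rw [Fin.sum_univ_three, Fin.sum_univ_three] at h
        simp only [show ((0 : Fin 3) + 1) = 1 from rfl, show ((1 : Fin 3) + 1) = 2 from rfl,
          show ((2 : Fin 3) + 1) = 0 from rfl, Equiv.refl_apply,
          show (Equiv.swap (1 : Fin 3) 2) 0 = 0 from rfl,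
          show (Equiv.swap (1 : Fin 3) 2) 1 = 2 from rfl,
          show (Equiv.swap (1 : Fin 3) 2) 2 = 1 from rfl] at h
        linarith
      · intro a b c d hab hac had hbc hbd hcd
        exfalso
        have va : (a : ℕ) < 3 := a.isLt
        have vb : (b : ℕ) < 3 := b.isLt
        have vc : (c : ℕ) < 3 := c.isLt
        have vd : (d : ℕ) < 3 := d.isLt
        have nab : (a : ℕ) ≠ b := fun h => hab (Fin.ext h)
        have nac : (a : ℕ) ≠ c := fun h => hac (Fin.ext h)
        have nad : (a : ℕ) ≠ d := fun h => had (Fin.ext h)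
        have nbc : (b : ℕ) ≠ c := fun h => hbc (Fin.ext h)
        have nbd : (b : ℕ) ≠ d := fun h => hbd (Fin.ext h)
        have ncd : (c : ℕ) ≠ d := fun h => hcd (Fin.ext h)
        omega
  · rintro ⟨α, β, hαβ⟩
    refine ⟨fun i _ => if i = 0 then (∑ v, α v + ∑ v, β v) else 0, fun π => ?_⟩
    rw [qap_hmat]
    have hne : ∀ i : Fin n, π i ≠ π (i + 1) :=
      fun i h => fin_ne_add_one (by omega) i (π.injective h)
    have h1 : Ksum A π = ∑ i, (α (π i) + β (π (i + 1))) := by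
      unfold Ksum
      exact Finset.sum_congr rfl fun i _ => hαβ _ _ (hne i)
    have h2 : ∑ i, β (π (i + 1)) = ∑ v, β v := by
      have := Equiv.sum_comp ((Equiv.addRight (1 : Fin n)).trans π) β
      simpa using this
    have h3 : ∑ i, α (π i) = ∑ v, α v := Equiv.sum_comp π α
    rw [h1, Finset.sum_add_distrib, h2, h3]
    unfold LAP
    rw [Finset.sum_ite_eq' Finset.univ (0 : Fin n) (fun _ => ∑ v, α v + ∑ v, β v)]
    simp
end
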